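/- arXiv:1308.4296 — 4 statements merged into one kernel-verified Lean document; each statement's English description precedes it below -/
import Mathlib

section
/- Let e = 2 and let λ = (a, 1^b) be a hook partition of n with b even. If T is a standard λ-tableau whose residue sequence equals the residue sequence of the initial tableau T_λ (filled down the first column then along the first row), then for every i with 1 ≤ i ≤ ⌈n/2⌉ − 1, the entry 2i+1 occupies the node immediately following the node of 2i: if 2i lies in the first column then 2i+1 lies directly below it, and if 2i lies in the first row then 2i+1 lies directly to its right. -/
/-- The rank of `k` in the leg set `L`: the number of leg entries `≤ k`.  For `k` in the leg,
`k` sits in row `1 + rank`; for `k` in the arm, `k` sits in column `k - rank`. -/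
def legRank (L : Finset ℕ) (k : ℕ) : ℕ := (L.filter (· ≤ k)).card

/-- The residue (at `e = 2`) of the node occupied by `k` in the standard hook tableau whose
set of leg entries (other than the corner entry `1`) is `L`. -/
def resT (L : Finset ℕ) (k : ℕ) : ZMod 2 :=
  if k ∈ L then (legRank L k : ZMod 2) else ((k + 1 + legRank L k : ℕ) : ZMod 2)

/-!
At an even position `k` the residue condition `resT L k = k + 1` fixes the parity of the leg
rank `r` of `k`: `k` lies in the leg iff `r` is odd.  At the odd position `k + 1` it says again
that `k + 1` lies in the leg iff `r` is odd.  Hence `k = 2i` and `k + 1` lie in the same part of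
the hook, where `k + 1` is the next entry after `k`.
-/

theorem legRank_succ (L : Finset ℕ) (k : ℕ) :
    legRank L (k + 1) = legRank L k + if k + 1 ∈ L then 1 else 0 := by
  have hsplit : L.filter (· ≤ k + 1) = L.filter (· ≤ k) ∪ L.filter (· = k + 1) := by
    rw [← Finset.filter_or]
    exact Finset.filter_congr fun _ _ => Nat.le_succ_iff
  have hdisj : Disjoint (L.filter (· ≤ k)) (L.filter (· = k + 1)) :=
    Finset.disjoint_filter.2 fun _ _ hle heq => by omega
  rw [legRank, legRank, hsplit, Finset.card_union_of_disjoint hdisj, Finset.filter_eq']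
  split_ifs <;> rfl

theorem legRank_le_of_notMem {L : Finset ℕ} {k : ℕ} (hk : k ∉ L) : legRank L k ≤ k :=
  calc legRank L k ≤ ((Finset.range (k + 1)).erase k).card :=
        Finset.card_le_card fun x hx => by
          simp only [Finset.mem_filter] at hx
          simp only [Finset.mem_erase, Finset.mem_range]
          exact ⟨fun h => hk (h ▸ hx.1), by omega⟩
    _ = k := by simp

theorem succ_mem_iff_of_resT {L : Finset ℕ} {k : ℕ} (hk : Even k)
    (h₀ : resT L k = ((k + 1 : ℕ) : ZMod 2)) (h₁ : resT L (k + 1) = ((k + 2 : ℕ) : ZMod 2)) :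
    k + 1 ∈ L ↔ k ∈ L := by
  obtain ⟨m, rfl⟩ := hk
  unfold resT at h₀ h₁
  rw [legRank_succ] at h₁
  split_ifs at h₀ h₁ with hk hk₁ hk₁ <;> rw [ZMod.natCast_eq_natCast_iff'] at h₀ h₁
  · exact iff_of_true hk₁ hk
  · omega
  · omega
  · exact iff_of_false hk₁ hk

theorem specht_hook_domino_structure_general (n : ℕ) (L : Finset ℕ)
    (hres : ∀ k, 1 ≤ k → k ≤ n → resT L k = ((k + 1 : ℕ) : ZMod 2)) :
    ∀ i, 1 ≤ i → i ≤ (n + 1) / 2 - 1 →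
      (2 * i ∈ L → 2 * i + 1 ∈ L ∧
          1 + legRank L (2 * i + 1) = (1 + legRank L (2 * i)) + 1) ∧
      (2 * i ∉ L → 2 * i + 1 ∉ L ∧
          2 * i + 1 - legRank L (2 * i + 1) = (2 * i - legRank L (2 * i)) + 1) := by
  intro i hi hin
  have hiff : 2 * i + 1 ∈ L ↔ 2 * i ∈ L :=
    succ_mem_iff_of_resT (even_two_mul i) (hres _ (by omega) (by omega))
      (hres _ (by omega) (by omega))
  refine ⟨fun hleg => ⟨hiff.2 hleg, ?_⟩, fun harm => ⟨mt hiff.1 harm, ?_⟩⟩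
  · rw [legRank_succ, if_pos (hiff.2 hleg)]
    omega
  · rw [legRank_succ, if_neg (mt hiff.1 harm)]
    have := legRank_le_of_notMem harm
    omega

/-- Lemma `D_i`: for `e = 2` and a hook `λ = (a, 1^b)` with `b` even, if a
standard `λ`-tableau (encoded by its set `L` of leg entries) has residue sequence equal to
`i_λ = (0,1,0,1,…)`, then for all `1 ≤ i ≤ ⌈n/2⌉ - 1` the entry `2i+1` immediately follows
`2i`: if `2i` is in the leg then `2i+1` is directly below it, and if `2i` is in the arm then
`2i+1` is directly to its right. -/
theorem specht_hook_domino_structure (n a b : ℕ) (hn : n = a + b) (ha : 1 ≤ a) (hb : Even b)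
    (L : Finset ℕ) (hL : L ⊆ Finset.Icc 2 n) (hcard : L.card = b)
    (hres : ∀ k, 1 ≤ k → k ≤ n → resT L k = ((k + 1 : ℕ) : ZMod 2)) :
    ∀ i, 1 ≤ i → i ≤ (n + 1) / 2 - 1 →
      (2 * i ∈ L → 2 * i + 1 ∈ L ∧
          1 + legRank L (2 * i + 1) = (1 + legRank L (2 * i)) + 1) ∧
      (2 * i ∉ L → 2 * i + 1 ∉ L ∧
          2 * i + 1 - legRank L (2 * i + 1) = (2 * i - legRank L (2 * i)) + 1) :=
  specht_hook_domino_structure_general n L hres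
end

section
/- Let e = 2 and λ = (a, 1^b) a hook partition of n. For any standard λ-tableau T and 1 < i < n: (1) if i, i+1, …, n all lie in the arm of T, then ψ_i v_T = 0; (2) if i lies in the leg of T and i+1 lies in the arm, then ψ_i v_T = v_U, where U is obtained from T by swapping the entries i and i+1 (and U is again standard). -/
/-!
A standard hook tableau corresponds to a permutation `w_T` that is increasing on the leg and on
the arm positions, hence 321-avoiding. Two adjacent left descents would form a 321 pattern, so
(Matsumoto's theorem in the fully commutative case) any two reduced words of a 321-avoiding
permutation differ by commutations of distant generators only, and `ψ_w` does not depend on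
the word. In case (2), `i :: l` is a reduced word of the standard permutation `s_i w_T`. In
case (1), `w_T` fixes `i, …, n`, so every letter of a reduced word of `w_T` is at most `i - 2`;
then `ψ_i` commutes past `ψ_{w_T}` and kills `z`.
-/

open scoped BigOperators

def swapSeq (r : ℕ) (i : ℕ → ZMod 2) : ℕ → ZMod 2 :=
  fun k => if k = r then i (r + 1) else if k = r + 1 then i r else i k

/-- The KLR (quiver Hecke) algebra relations of type `A₁⁽¹⁾` (quantum characteristic `e = 2`)
on `n` strands, with generators `y 1, …, y n`, `ψ 1, …, ψ (n-1)` and idempotents `e i`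
indexed by residue sequences `i : ℕ → ZMod 2` (positions `1, …, n` are the relevant ones). -/
structure KLR (A : Type*) [Ring A] (n : ℕ) where
  y : ℕ → A
  ψ : ℕ → A
  e : (ℕ → ZMod 2) → A
  e_idem : ∀ i, e i * e i = e i
  e_orth : ∀ i j, i ≠ j → e i * e j = 0
  y_e : ∀ r i, 1 ≤ r → r ≤ n → y r * e i = e i * y r
  psi_e : ∀ r i, 1 ≤ r → r + 1 ≤ n → ψ r * e i = e (swapSeq r i) * ψ r
  y_comm : ∀ r s, 1 ≤ r → r ≤ n → 1 ≤ s → s ≤ n → y r * y s = y s * y r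
  y_psi_comm : ∀ r s, 1 ≤ r → r + 1 ≤ n → 1 ≤ s → s ≤ n → s ≠ r → s ≠ r + 1 →
    y s * ψ r = ψ r * y s
  y_psi_same : ∀ r i, 1 ≤ r → r + 1 ≤ n → i r = i (r + 1) →
    y r * ψ r * e i = (ψ r * y (r + 1) - 1) * e i
  y_psi_diff : ∀ r i, 1 ≤ r → r + 1 ≤ n → i r ≠ i (r + 1) →
    y r * ψ r * e i = ψ r * y (r + 1) * e i
  y_psi_same' : ∀ r i, 1 ≤ r → r + 1 ≤ n → i r = i (r + 1) →
    y (r + 1) * ψ r * e i = (ψ r * y r + 1) * e i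
  y_psi_diff' : ∀ r i, 1 ≤ r → r + 1 ≤ n → i r ≠ i (r + 1) →
    y (r + 1) * ψ r * e i = ψ r * y r * e i
  psi_comm : ∀ r s, 1 ≤ r → r + 1 ≤ n → 1 ≤ s → s + 1 ≤ n → r + 1 < s →
    ψ s * ψ r = ψ r * ψ s
  psi_sq_same : ∀ r i, 1 ≤ r → r + 1 ≤ n → i r = i (r + 1) → ψ r * ψ r * e i = 0
  psi_sq_diff : ∀ r i, 1 ≤ r → r + 1 ≤ n → i r ≠ i (r + 1) →
    ψ r * ψ r * e i = -((y r - y (r + 1)) ^ 2) * e i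
  braid_same : ∀ r i, 1 ≤ r → r + 2 ≤ n → (i r = i (r + 1) ∨ i (r + 1) = i (r + 2)) →
    ψ r * ψ (r + 1) * ψ r * e i = ψ (r + 1) * ψ r * ψ (r + 1) * e i
  braid_diff : ∀ r i, 1 ≤ r → r + 2 ≤ n → i r ≠ i (r + 1) → i (r + 1) ≠ i (r + 2) →
    ψ r * ψ (r + 1) * ψ r * e i =
      (ψ (r + 1) * ψ r * ψ (r + 1) + y r - 2 * y (r + 1) + y (r + 2)) * e i

variable {A : Type*} [Ring A] {n : ℕ}

/-- `Ψ j = ψ j * ψ (j+1) * ψ (j-1) * ψ j`. -/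
def PsiBig (K : KLR A n) (j : ℕ) : A := K.ψ j * K.ψ (j + 1) * K.ψ (j - 1) * K.ψ j

/-- `Ψ↓(x,y) = Ψ x * Ψ (x-2) * ⋯ * Ψ y` (the empty product `1` if `x < y`). -/
def chainD (K : KLR A n) (x y : ℕ) : A :=
  ((List.range ((x + 2 - y) / 2)).map fun k => PsiBig K (x - 2 * k)).prod

/-- `Ψ↑(x,y) = Ψ x * Ψ (x+2) * ⋯ * Ψ y` (the empty product `1` if `y < x`). -/
def chainU (K : KLR A n) (x y : ℕ) : A :=
  ((List.range ((y + 2 - x) / 2)).map fun k => PsiBig K (x + 2 * k)).prod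

/-- `ψ_w` along a word `l` of indices. -/
def psiWord (K : KLR A n) (l : List ℕ) : A := (l.map K.ψ).prod

/-- `ψ x * ψ (x+1) * ⋯ * ψ y`. -/
def ascWord (K : KLR A n) (x y : ℕ) : A :=
  psiWord K ((List.range (y + 1 - x)).map fun t => x + t)

/-- The residue sequence `i_λ` of the initial tableau of the hook `(a, 1^b)` at `e = 2`. -/
def iLamGen (b : ℕ) : ℕ → ZMod 2 :=
  fun k => if k ≤ b + 1 then (k : ZMod 2) + 1 else (k : ZMod 2) + (b : ZMod 2) + 1

/-- `normProd K base [j₁, …, j_d] = Ψ↓(j₁, base) * Ψ↓(j₂, base+2) * ⋯ * Ψ↓(j_d, base+2(d-1))`. -/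
def normProd (K : KLR A n) : ℕ → List ℕ → A
  | _, [] => 1
  | base, j :: rest => chainD K j base * normProd K (base + 2) rest

/-- Valid normal-form data `[j₁ < j₂ < ⋯ < j_d]` for a domino tableau of the hook `(a,1^b)`,
`n = a + b`: all `jᵢ` odd, `b + 3 - 2d + 2i ≤ jᵢ₊₁ ≤ n - 2` (written without truncated
subtraction). -/
def NormOK (n b : ℕ) (p : List ℕ) : Prop :=
  2 * p.length ≤ b ∧ List.Chain' (· < ·) p ∧
    ∀ i, (h : i < p.length) → Odd (p.get ⟨i, h⟩) ∧
      b + 3 + 2 * i ≤ p.get ⟨i, h⟩ + 2 * p.length ∧ p.get ⟨i, h⟩ + 2 ≤ n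

/-- The number `r(T)` of `Ψ` factors in the normal form. -/
def rOf (b : ℕ) (p : List ℕ) : ℕ :=
  ∑ i ∈ Finset.range p.length, (p.getD i 0 + 2 * p.length - (b + 1 + 2 * i)) / 2

/-- `[x, x-1, …, y]` (empty if `x < y`). -/
def descList (x y : ℕ) : List ℕ := (List.range (x + 1 - y)).map fun t => x - t

/-- The canonical reduced word of the permutation `w_T` for the standard hook tableau with
leg-entry set `L = {l₁ < ⋯ < l_b}`: the concatenation of the descending runs
`[l_k - 1, l_k - 2, …, k + 1]` for `k = 1, …, b`. -/
def tabWord (L : Finset ℕ) : List ℕ :=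
  (List.range L.card).flatMap fun k => descList ((L.sort (· ≤ ·)).getD k 0 - 1) (k + 2)

/-- Coxeter length as number of inversions in `{1, …, n}`. -/
def invLen (n : ℕ) (w : Equiv.Perm ℕ) : ℕ :=
  (((Finset.Icc 1 n) ×ˢ (Finset.Icc 1 n)).filter fun p => p.1 < p.2 ∧ w p.2 < w p.1).card

open Equiv

def FixesOutside (n : ℕ) (u : Perm ℕ) : Prop := ∀ m, m = 0 ∨ n < m → u m = m

def wordPerm (l : List ℕ) : Perm ℕ := (l.map fun r => swap r (r + 1)).prod

def IsReducedWord (n : ℕ) (l : List ℕ) (u : Perm ℕ) : Prop :=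
  (∀ r ∈ l, 1 ≤ r ∧ r + 1 ≤ n) ∧ wordPerm l = u ∧ l.length = invLen n u

def Avoids321 (u : Perm ℕ) : Prop := ∀ p q s, p < q → q < s → ¬(u s < u q ∧ u q < u p)

lemma wordPerm_cons (r : ℕ) (l : List ℕ) : wordPerm (r :: l) = swap r (r + 1) * wordPerm l := by
  simp [wordPerm]

lemma psiWord_cons (K : KLR A n) (r : ℕ) (l : List ℕ) :
    psiWord K (r :: l) = K.ψ r * psiWord K l := by
  simp [psiWord]

lemma symm_swap_mul_apply (u : Perm ℕ) (r x : ℕ) :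
    (swap r (r + 1) * u).symm x = u.symm (swap r (r + 1) x) := by
  rw [← Perm.inv_def, mul_inv_rev, swap_inv, Perm.mul_apply]
  rfl

lemma swap_lt_swap_iff {r x y : ℕ} :
    swap r (r + 1) y < swap r (r + 1) x ↔
      (x = r ∧ y = r + 1) ∨ (y < x ∧ ¬(x = r + 1 ∧ y = r)) := by
  simp only [swap_apply_def]
  split_ifs <;> omega

namespace FixesOutside

variable {u : Perm ℕ}

lemma one_le_apply (hu : FixesOutside n u) {m : ℕ} (hm : 1 ≤ m) : 1 ≤ u m := by
  by_contra h
  have := u.injective ((hu 0 (Or.inl rfl)).trans (Nat.lt_one_iff.1 (not_le.1 h)).symm)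
  omega

lemma apply_le (hu : FixesOutside n u) {m : ℕ} (hm : m ≤ n) : u m ≤ n := by
  by_contra h
  have := u.injective (hu (u m) (Or.inr (not_le.1 h)))
  omega

protected lemma symm (hu : FixesOutside n u) : FixesOutside n u.symm :=
  fun m hm => u.symm_apply_eq.2 (hu m hm).symm

lemma swap_mul (hu : FixesOutside n u) {r : ℕ} (hr : 1 ≤ r) (hrn : r + 1 ≤ n) :
    FixesOutside n (swap r (r + 1) * u) := fun m hm => by
  rw [Perm.mul_apply, hu m hm]
  exact swap_apply_of_ne_of_ne (by omega) (by omega)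

lemma of_swap_mul {r : ℕ} (hr : 1 ≤ r) (hrn : r + 1 ≤ n)
    (hu : FixesOutside n (swap r (r + 1) * u)) : FixesOutside n u := by
  simpa only [swap_mul_self_mul] using hu.swap_mul hr hrn

lemma wordPerm {l : List ℕ} (hl : ∀ r ∈ l, 1 ≤ r ∧ r + 1 ≤ n) : FixesOutside n (wordPerm l) := by
  induction l with
  | nil => exact fun _ _ => rfl
  | cons r t ih =>
    rw [wordPerm_cons]
    exact (ih fun x hx => hl x (List.mem_cons_of_mem r hx)).swap_mul
      (hl r List.mem_cons_self).1 (hl r List.mem_cons_self).2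

-- An increasing bijection of ℕ is the identity.
lemma eq_one (hu : FixesOutside n u) (h : ∀ r, 1 ≤ r → r + 1 ≤ n → u r < u (r + 1)) :
    u = 1 := by
  have hmono : StrictMono u := strictMono_nat_of_lt_succ fun m => by
    rcases Nat.lt_or_ge m 1 with h0 | h1
    · rw [Nat.lt_one_iff.1 h0, hu 0 (Or.inl rfl)]
      exact hu.one_le_apply le_rfl
    rcases Nat.lt_or_ge m n with hmn | hmn
    · exact h m h1 hmn
    rw [hu (m + 1) (Or.inr (by omega))]
    rcases hmn.eq_or_lt with rfl | hlt
    · exact Nat.lt_succ_of_le (hu.apply_le le_rfl)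
    · rw [hu m (Or.inr hlt)]
      exact lt_add_one m
  ext m
  exact congrArg (· m) (Subsingleton.elim (hmono.orderIsoOfSurjective u u.surjective)
    (OrderIso.refl ℕ))

end FixesOutside

section invLen

variable {u : Perm ℕ} {r : ℕ}

lemma invLen_one : invLen n 1 = 0 := by
  rw [invLen, Finset.card_eq_zero, Finset.filter_eq_empty_iff]
  intro x _
  simp only [Perm.one_apply]
  omega

lemma swap_mul_lt_swap_mul_iff (h : u.symm r < u.symm (r + 1)) {x y : ℕ} (hxy : x < y) :
    (swap r (r + 1) * u) y < (swap r (r + 1) * u) x ↔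
      (x = u.symm r ∧ y = u.symm (r + 1)) ∨ u y < u x := by
  rw [Perm.mul_apply, Perm.mul_apply, swap_lt_swap_iff, u.eq_symm_apply,
    u.eq_symm_apply]
  have : ¬(u x = r + 1 ∧ u y = r) := by
    rintro ⟨hx, hy⟩
    rw [← hx, ← hy, symm_apply_apply, symm_apply_apply] at h
    omega
  tauto

lemma invLen_swap_mul_of_lt (hu : FixesOutside n u) (hr : 1 ≤ r) (hrn : r + 1 ≤ n)
    (h : u.symm r < u.symm (r + 1)) :
    invLen n (swap r (r + 1) * u) = invLen n u + 1 := by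
  have hmem : ∀ m, 1 ≤ m → m ≤ n → 1 ≤ u.symm m ∧ u.symm m ≤ n := fun m h1 h2 =>
    ⟨hu.symm.one_le_apply h1, hu.symm.apply_le h2⟩
  have hset : ((Finset.Icc 1 n ×ˢ Finset.Icc 1 n).filter fun p =>
        p.1 < p.2 ∧ (swap r (r + 1) * u) p.2 < (swap r (r + 1) * u) p.1) =
      insert (u.symm r, u.symm (r + 1)) ((Finset.Icc 1 n ×ˢ Finset.Icc 1 n).filter fun p =>
        p.1 < p.2 ∧ u p.2 < u p.1) := by
    ext ⟨x, y⟩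
    simp only [Finset.mem_filter, Finset.mem_insert, Finset.mem_product, Finset.mem_Icc,
      Prod.mk.injEq]
    by_cases hxy : x < y
    · rw [swap_mul_lt_swap_mul_iff h hxy]
      have := hmem r hr (by omega)
      have := hmem (r + 1) (by omega) hrn
      constructor
      · tauto
      · rintro (⟨rfl, rfl⟩ | hxy)
        · omega
        · tauto
    · constructor
      · tauto
      · rintro (⟨rfl, rfl⟩ | _) <;> omega
  have hnot : (u.symm r, u.symm (r + 1)) ∉ (Finset.Icc 1 n ×ˢ Finset.Icc 1 n).filter fun p =>
      p.1 < p.2 ∧ u p.2 < u p.1 := by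
    simp only [Finset.mem_filter, apply_symm_apply]
    omega
  rw [invLen, invLen, hset, Finset.card_insert_of_notMem hnot]

lemma invLen_swap_mul_of_gt (hu : FixesOutside n u) (hr : 1 ≤ r) (hrn : r + 1 ≤ n)
    (h : u.symm (r + 1) < u.symm r) :
    invLen n u = invLen n (swap r (r + 1) * u) + 1 := by
  have := invLen_swap_mul_of_lt (hu.swap_mul hr hrn) hr hrn (by
    simpa only [symm_swap_mul_apply, swap_apply_left, swap_apply_right] using h)
  rwa [swap_mul_self_mul] at this

lemma invLen_swap_mul_le (hu : FixesOutside n u) (hr : 1 ≤ r) (hrn : r + 1 ≤ n) :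
    invLen n (swap r (r + 1) * u) ≤ invLen n u + 1 := by
  rcases lt_or_gt_of_ne (u.symm.injective.ne (show r ≠ r + 1 by omega)) with h | h
  · exact (invLen_swap_mul_of_lt hu hr hrn h).le
  · have := invLen_swap_mul_of_gt hu hr hrn h
    omega

lemma invLen_wordPerm_le {l : List ℕ} (hl : ∀ r ∈ l, 1 ≤ r ∧ r + 1 ≤ n) :
    invLen n (wordPerm l) ≤ l.length := by
  induction l with
  | nil => simp [wordPerm, invLen_one]
  | cons r t ih =>
    have ht : ∀ x ∈ t, 1 ≤ x ∧ x + 1 ≤ n := fun x hx => hl x (List.mem_cons_of_mem r hx)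
    rw [wordPerm_cons, List.length_cons]
    have := invLen_swap_mul_le (FixesOutside.wordPerm ht) (hl r List.mem_cons_self).1
      (hl r List.mem_cons_self).2
    have := ih ht
    omega

lemma symm_swap_mul_lt_of_lt {s : ℕ} (hrs : r + 1 < s ∨ s + 1 < r)
    (h : u.symm (s + 1) < u.symm s) :
    (swap r (r + 1) * u).symm (s + 1) < (swap r (r + 1) * u).symm s := by
  rwa [symm_swap_mul_apply, symm_swap_mul_apply, swap_apply_of_ne_of_ne (by omega) (by omega),
    swap_apply_of_ne_of_ne (by omega) (by omega)]

end invLen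

namespace IsReducedWord

variable {u : Perm ℕ} {r : ℕ} {t : List ℕ}

lemma fixesOutside {l : List ℕ} (h : IsReducedWord n l u) : FixesOutside n u :=
  h.2.1 ▸ FixesOutside.wordPerm h.1

lemma of_cons (h : IsReducedWord n (r :: t) u) :
    u.symm (r + 1) < u.symm r ∧ IsReducedWord n t (swap r (r + 1) * u) := by
  obtain ⟨hl, hw, hlen⟩ := h
  obtain ⟨hr, hrn⟩ := hl r List.mem_cons_self
  have ht : ∀ x ∈ t, 1 ≤ x ∧ x + 1 ≤ n := fun x hx => hl x (List.mem_cons_of_mem r hx)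
  have htw : wordPerm t = swap r (r + 1) * u := by
    rw [← hw, wordPerm_cons, swap_mul_self_mul]
  have hle := invLen_wordPerm_le ht
  rw [htw] at hle
  have hu : FixesOutside n u := hw ▸ FixesOutside.wordPerm hl
  rw [List.length_cons] at hlen
  rcases lt_or_gt_of_ne (u.symm.injective.ne (show r + 1 ≠ r by omega)) with hd | ha
  · have := invLen_swap_mul_of_gt hu hr hrn hd
    exact ⟨hd, ht, htw, by omega⟩
  · have := invLen_swap_mul_of_lt hu hr hrn ha
    omega

lemma cons (hr : 1 ≤ r) (hrn : r + 1 ≤ n) (hd : u.symm (r + 1) < u.symm r)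
    (ht : IsReducedWord n t (swap r (r + 1) * u)) : IsReducedWord n (r :: t) u := by
  have hu := ht.fixesOutside.of_swap_mul hr hrn
  refine ⟨?_, ?_, ?_⟩
  · rintro x (_ | ⟨_, hx⟩)
    exacts [⟨hr, hrn⟩, ht.1 x hx]
  · rw [wordPerm_cons, ht.2.1, swap_mul_self_mul]
  · rw [List.length_cons, ht.2.2, invLen_swap_mul_of_gt hu hr hrn hd]

end IsReducedWord

lemma exists_isReducedWord {u : Perm ℕ} (hu : FixesOutside n u) : ∃ l, IsReducedWord n l u := by
  induction hN : invLen n u using Nat.strong_induction_on generalizing u with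
  | _ N ih =>
    by_cases hd : ∃ r, 1 ≤ r ∧ r + 1 ≤ n ∧ u.symm (r + 1) < u.symm r
    · obtain ⟨r, hr, hrn, hd⟩ := hd
      have hlen := invLen_swap_mul_of_gt hu hr hrn hd
      obtain ⟨t, ht⟩ := ih _ (by omega) (hu.swap_mul hr hrn) rfl
      exact ⟨r :: t, ht.cons hr hrn hd⟩
    · push Not at hd
      have hu1 : u.symm = 1 := hu.symm.eq_one fun r hr hrn =>
        (hd r hr hrn).lt_of_ne (u.symm.injective.ne (by omega))
      obtain rfl : u = 1 := by rw [← inv_inj, Perm.inv_def, hu1, inv_one]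
      exact ⟨[], fun _ h => absurd h List.not_mem_nil, rfl, invLen_one.symm⟩

namespace Avoids321

variable {u : Perm ℕ} {r : ℕ}

lemma swap_mul (hu : Avoids321 u) (hd : u.symm (r + 1) < u.symm r) :
    Avoids321 (swap r (r + 1) * u) := by
  have hv : (swap r (r + 1) * u).symm r < (swap r (r + 1) * u).symm (r + 1) := by
    simpa only [symm_swap_mul_apply, swap_apply_left, swap_apply_right] using hd
  have hinv : ∀ x y, x < y → (swap r (r + 1) * u) y < (swap r (r + 1) * u) x → u y < u x :=
    fun x y hxy h => by
      simpa only [swap_mul_self_mul] using (swap_mul_lt_swap_mul_iff hv hxy).2 (Or.inr h)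
  rintro p q s hpq hqs ⟨h₁, h₂⟩
  exact hu p q s hpq hqs ⟨hinv q s hqs h₁, hinv p q hpq h₂⟩

lemma not_lt_of_lt (hu : Avoids321 u) (hd : u.symm (r + 1) < u.symm r) :
    ¬u.symm (r + 2) < u.symm (r + 1) := fun h =>
  hu _ _ _ h hd (by simp only [apply_symm_apply]; omega)

end Avoids321

lemma StrictMonoOn.swap_mul {u : Perm ℕ} {S : Set ℕ} {r : ℕ} (h : StrictMonoOn u S)
    (hr : ¬(u.symm r ∈ S ∧ u.symm (r + 1) ∈ S)) : StrictMonoOn (swap r (r + 1) * u) S :=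
  fun x hx y hy hxy => by
    rw [Perm.mul_apply, Perm.mul_apply, swap_lt_swap_iff (x := u y) (y := u x)]
    refine Or.inr ⟨h hx hy hxy, ?_⟩
    rintro ⟨hy', hx'⟩
    exact hr ⟨by rwa [← hx', symm_apply_apply], by rwa [← hy', symm_apply_apply]⟩

lemma avoids321_of_strictMonoOn {u : Perm ℕ} (S : Set ℕ) (h : StrictMonoOn u S)
    (h' : StrictMonoOn u Sᶜ) : Avoids321 u := by
  have hsplit : ∀ x y, x < y → u y < u x → (x ∈ S ↔ y ∉ S) := fun x y hxy hyx => by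
    by_cases hx : x ∈ S <;> by_cases hy : y ∈ S
    · exact absurd (h hx hy hxy) hyx.not_gt
    · tauto
    · tauto
    · exact absurd (h' hx hy hxy) hyx.not_gt
  rintro p q s hpq hqs ⟨h₁, h₂⟩
  have := hsplit p q hpq h₂
  have := hsplit q s hqs h₁
  have := hsplit p s (hpq.trans hqs) (h₁.trans h₂)
  tauto

lemma avoids321_of_hook {b : ℕ} {u : Perm ℕ} (hu : FixesOutside n u) (h1 : u 1 = 1)
    (hleg : StrictMonoOn u (Set.Icc 2 (b + 1))) (harm : StrictMonoOn u (Set.Icc (b + 2) n)) :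
    Avoids321 u := by
  have hsmall : ∀ x ≤ 1, u x = x := fun x hx => by
    interval_cases x
    exacts [hu 0 (Or.inl rfl), h1]
  refine avoids321_of_strictMonoOn (Set.Iic (b + 1)) (fun p hp q hq hpq => ?_)
    (fun p hp q hq hpq => ?_)
  · simp only [Set.mem_Iic] at hp hq
    rcases Nat.lt_or_ge p 2 with hp2 | hp2
    · rw [hsmall p (by omega)]
      by_contra hle
      have := u.injective (hsmall (u q) (by omega))
      omega
    · exact hleg ⟨hp2, hp⟩ ⟨by omega, hq⟩ hpq
  · simp only [Set.mem_compl_iff, Set.mem_Iic, not_le] at hp hq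
    rcases Nat.lt_or_ge n q with hqn | hqn
    · rw [hu q (Or.inr hqn)]
      rcases Nat.lt_or_ge n p with hpn | hpn
      · rwa [hu p (Or.inr hpn)]
      · exact (hu.apply_le hpn).trans_lt hqn
    · exact harm ⟨hp, by omega⟩ ⟨hq, hqn⟩ hpq

theorem psiWord_eq_of_avoids321 (K : KLR A n) {u : Perm ℕ} (hu : Avoids321 u) {l₁ l₂ : List ℕ}
    (h₁ : IsReducedWord n l₁ u) (h₂ : IsReducedWord n l₂ u) : psiWord K l₁ = psiWord K l₂ := by
  obtain ⟨N, hN⟩ : ∃ N, invLen n u = N := ⟨_, rfl⟩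
  induction N generalizing u l₁ l₂ with
  | zero =>
    rw [List.length_eq_zero_iff.1 (h₁.2.2.trans hN), List.length_eq_zero_iff.1 (h₂.2.2.trans hN)]
  | succ N ih =>
    obtain ⟨r, t₁, rfl⟩ := List.exists_cons_of_length_eq_add_one (h₁.2.2.trans hN)
    obtain ⟨s, t₂, rfl⟩ := List.exists_cons_of_length_eq_add_one (h₂.2.2.trans hN)
    obtain ⟨hr, hrn⟩ := h₁.1 r List.mem_cons_self
    obtain ⟨hs, hsn⟩ := h₂.1 s List.mem_cons_self
    obtain ⟨hdr, ht₁⟩ := h₁.of_cons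
    obtain ⟨hds, ht₂⟩ := h₂.of_cons
    have hNr : invLen n (swap r (r + 1) * u) = N := by simpa [ht₁.2.2, hN] using h₁.2.2
    have hNs : invLen n (swap s (s + 1) * u) = N := by simpa [ht₂.2.2, hN] using h₂.2.2
    rcases eq_or_ne r s with rfl | hrs
    · rw [psiWord_cons, psiWord_cons, ih (hu.swap_mul hdr) ht₁ ht₂ hNr]
    wlog hlt : r < s generalizing r s t₁ t₂
    · exact (this s t₂ h₂ r t₁ h₁ hs hsn hr hrn hds ht₂ hdr ht₁ hNs hNr hrs.symm
        (by omega)).symm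
    have hrs2 : r + 1 < s := by
      by_contra
      obtain rfl : s = r + 1 := by omega
      exact hu.not_lt_of_lt hdr hds
    have hcomm : Commute (swap r (r + 1)) (swap s (s + 1)) :=
      (Perm.disjoint_swap_swap (by
        simp only [List.nodup_cons, List.mem_cons, List.not_mem_nil, List.nodup_nil, or_false,
          not_false_eq_true, and_true]
        omega)).commute
    obtain ⟨t, ht⟩ := exists_isReducedWord ((h₁.fixesOutside.swap_mul hr hrn).swap_mul hs hsn)
    have e₁ : psiWord K t₁ = psiWord K (s :: t) :=
      ih (hu.swap_mul hdr) ht₁ (ht.cons hs hsn (symm_swap_mul_lt_of_lt (Or.inl hrs2) hds)) hNr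
    have e₂ : psiWord K t₂ = psiWord K (r :: t) :=
      ih (hu.swap_mul hds) ht₂ (IsReducedWord.cons hr hrn (symm_swap_mul_lt_of_lt (Or.inr hrs2) hdr)
        (by rwa [← mul_assoc, hcomm.eq, mul_assoc])) hNs
    rw [psiWord_cons, psiWord_cons, e₁, e₂, psiWord_cons, psiWord_cons, ← mul_assoc,
      ← mul_assoc, K.psi_comm r s hr hrn hs hsn hrs2]

lemma FixesOutside.symm_apply_eq_self_of_strictMonoOn {u : Perm ℕ} {c i : ℕ}
    (hu : FixesOutside n u) (hinc : StrictMonoOn u (Set.Icc c n))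
    (h : ∀ m, i ≤ m → m ≤ n → c ≤ u.symm m) : ∀ m, i ≤ m → u.symm m = m := by
  refine Nat.strong_decreasing_induction ⟨n, fun m hm _ => hu.symm m (Or.inr hm)⟩
    fun m ih him => ?_
  rcases Nat.lt_or_ge n m with hmn | hmn
  · exact hu.symm m (Or.inr hmn)
  have hc := h m him hmn
  have hpn : u.symm m ≤ n := hu.symm.apply_le hmn
  rcases lt_trichotomy (u.symm m) m with hlt | heq | hgt
  -- the position after `u⁻¹ m` carries a larger value, which is already known to be fixed
  · have hnext : m < u (u.symm m + 1) := by
      conv_lhs => rw [← u.apply_symm_apply m]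
      exact hinc ⟨hc, hpn⟩ ⟨by omega, by omega⟩ (lt_add_one _)
    have := ih _ hnext (by omega)
    rw [symm_apply_apply] at this
    have := hu.apply_le (show u.symm m + 1 ≤ n by omega)
    omega
  · exact heq
  · have := ih _ hgt (by omega)
    rw [u.symm_apply_eq, apply_symm_apply] at this
    omega

lemma IsReducedWord.add_two_le_of_forall_symm_apply_eq {u : Perm ℕ} {l : List ℕ} {i : ℕ}
    (h : IsReducedWord n l u) (hfix : ∀ m, i ≤ m → u.symm m = m) : ∀ r ∈ l, r + 2 ≤ i := by
  induction l generalizing u with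
  | nil => exact fun _ h => absurd h List.not_mem_nil
  | cons r t ih =>
    obtain ⟨hd, ht⟩ := h.of_cons
    have hr : r + 2 ≤ i := by
      by_contra hri
      rw [hfix (r + 1) (by omega)] at hd
      have := u.symm.injective (hfix (u.symm r) (by omega))
      omega
    have hfix' : ∀ m, i ≤ m → (swap r (r + 1) * u).symm m = m := fun m hm => by
      rw [symm_swap_mul_apply, swap_apply_of_ne_of_ne (by omega) (by omega), hfix m hm]
    rintro x (_ | ⟨_, hx⟩)
    exacts [hr, ih ht hfix' x hx]

lemma commute_psi_psiWord (K : KLR A n) {i : ℕ} {l : List ℕ} (hin : i + 1 ≤ n)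
    (hl : ∀ r ∈ l, 1 ≤ r ∧ r + 2 ≤ i) : Commute (K.ψ i) (psiWord K l) :=
  Commute.list_prod_right _ _ fun x hx => by
    obtain ⟨r, hr, rfl⟩ := List.mem_map.1 hx
    obtain ⟨hr1, hri⟩ := hl r hr
    exact K.psi_comm r i hr1 (by omega) (by omega) hin (by omega)

/-- A standard tableau `T` of the hook `(a, 1^b)` is encoded by `w = w_T`: it fixes `1` and
everything outside `{1, …, n}` and is increasing on the leg positions `{2, …, b+1}` and on the
arm positions `{b+2, …, n}`; `v_T = ψ_{w_T} z` along a reduced word `l` of `w_T`. -/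
theorem specht_hook_psi_on_basis_general {M : Type*} [AddCommGroup M] [Module A M]
    (b : ℕ)
    (K : KLR A n) (z : M)
    (hpsiz : ∀ j, 1 ≤ j → j + 1 ≤ n → j ≠ b + 1 → K.ψ j • z = 0)
    (w : Equiv.Perm ℕ)
    (hwfix : ∀ m, m = 0 ∨ n < m → w m = m) (hw1 : w 1 = 1)
    (hleg : ∀ p q, 2 ≤ p → p < q → q ≤ b + 1 → w p < w q)
    (harm : ∀ p q, b + 2 ≤ p → p < q → q ≤ n → w p < w q)
    (l : List ℕ) (hl : ∀ r ∈ l, 1 ≤ r ∧ r + 1 ≤ n)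
    (hlw : (l.map fun r => Equiv.swap r (r + 1)).prod = w)
    (hlred : l.length = invLen n w)
    (i : ℕ) (hi1 : 1 < i) (hin : i < n) :
    ((∀ m, i ≤ m → m ≤ n → b + 2 ≤ w.symm m) → K.ψ i • (psiWord K l • z) = 0) ∧
    (2 ≤ w.symm i → w.symm i ≤ b + 1 → b + 2 ≤ w.symm (i + 1) →
      (∀ l' : List ℕ, (∀ r ∈ l', 1 ≤ r ∧ r + 1 ≤ n) →
          (l'.map fun r => Equiv.swap r (r + 1)).prod = Equiv.swap i (i + 1) * w →
          l'.length = invLen n (Equiv.swap i (i + 1) * w) →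
          K.ψ i • (psiWord K l • z) = psiWord K l' • z) ∧
      (∀ p q, 2 ≤ p → p < q → q ≤ b + 1 →
          (Equiv.swap i (i + 1) * w) p < (Equiv.swap i (i + 1) * w) q) ∧
      (∀ p q, b + 2 ≤ p → p < q → q ≤ n →
          (Equiv.swap i (i + 1) * w) p < (Equiv.swap i (i + 1) * w) q)) := by
  have hw : FixesOutside n w := hwfix
  have hred : IsReducedWord n l w := ⟨hl, hlw, hlred⟩
  have hlegS : StrictMonoOn w (Set.Icc 2 (b + 1)) := fun p hp q hq hpq => hleg p q hp.1 hpq hq.2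
  have harmS : StrictMonoOn w (Set.Icc (b + 2) n) := fun p hp q hq hpq => harm p q hp.1 hpq hq.2
  refine ⟨fun hArm => ?_, fun hiLeg₁ hiLeg₂ hiArm => ?_⟩
  · have hfix := hw.symm_apply_eq_self_of_strictMonoOn harmS hArm
    have hbi : b + 2 ≤ i := hfix i le_rfl ▸ hArm i le_rfl hin.le
    have hlt := hred.add_two_le_of_forall_symm_apply_eq hfix
    rw [← mul_smul, (commute_psi_psiWord K hin fun r hr => ⟨(hl r hr).1, hlt r hr⟩).eq,
      mul_smul, hpsiz i (by omega) hin (by omega), smul_zero]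
  have hlegU := hlegS.swap_mul (r := i) (by simp only [Set.mem_Icc]; omega)
  have harmU := harmS.swap_mul (r := i) (by simp only [Set.mem_Icc]; omega)
  refine ⟨fun l' hl' hl'w hl'red => ?_,
    fun p q hp hpq hq => hlegU ⟨hp, by omega⟩ ⟨by omega, hq⟩ hpq,
    fun p q hp hpq hq => harmU ⟨hp, by omega⟩ ⟨by omega, hq⟩ hpq⟩
  have hv1 : (swap i (i + 1) * w) 1 = 1 := by
    rw [Perm.mul_apply, hw1]
    exact swap_apply_of_ne_of_ne (by omega) (by omega)
  have hv := avoids321_of_hook (hw.swap_mul (by omega) hin) hv1 hlegU harmU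
  have hred' : IsReducedWord n (i :: l) (swap i (i + 1) * w) :=
    IsReducedWord.cons (by omega) hin
      (by simp only [symm_swap_mul_apply, swap_apply_left, swap_apply_right]; omega)
      (by rwa [swap_mul_self_mul])
  rw [← mul_smul, ← psiWord_cons, psiWord_eq_of_avoids321 K hv hred' ⟨hl', hl'w, hl'red⟩]

/-- `e = 2`, `λ = (a, 1^b)` a hook partition of `n = a + b`.  The Specht
module is generated by `z` subject to `y_k z = 0`, `e(i) z = δ_{i,i_λ} z`, `ψ_j z = 0` for
`j ≠ b + 1` and `ψ_1 ⋯ ψ_{b+1} z = 0`.  A standard `λ`-tableau `T` is encoded by the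
permutation `w = w_T` (with `w_T T_λ = T`, fixing everything outside `{1, …, n}`, `w 1 = 1`,
increasing on leg positions `{2, …, b+1}` and on arm positions `{b+2, …, n}`), and
`v_T = ψ_{w_T} z` along any reduced word `l` for `w_T`.  Then for `1 < i < n`:
(1) if `i, i+1, …, n` all lie in the arm of `T` then `ψ_i v_T = 0`; and
(2) if `i` lies in the leg and `i + 1` in the arm, then `ψ_i v_T = v_U` where `U = s_i T`
(along any reduced word `l'` for `w_U = s_i w_T`), and `U` is again standard. -/
theorem specht_hook_psi_on_basis {M : Type*} [AddCommGroup M] [Module A M]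
    (a b : ℕ) (hn : n = a + b) (ha : 1 ≤ a) (hb : 1 ≤ b)
    (K : KLR A n) (z : M)
    (hy : ∀ k, 1 ≤ k → k ≤ n → K.y k • z = 0)
    (he1 : K.e (iLamGen b) • z = z)
    (he2 : ∀ i, i ≠ iLamGen b → K.e i • z = 0)
    (hpsiz : ∀ j, 1 ≤ j → j + 1 ≤ n → j ≠ b + 1 → K.ψ j • z = 0)
    (hgar : ascWord K 1 (b + 1) • z = 0)
    (w : Equiv.Perm ℕ)
    (hwfix : ∀ m, m = 0 ∨ n < m → w m = m) (hw1 : w 1 = 1)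
    (hleg : ∀ p q, 2 ≤ p → p < q → q ≤ b + 1 → w p < w q)
    (harm : ∀ p q, b + 2 ≤ p → p < q → q ≤ n → w p < w q)
    (l : List ℕ) (hl : ∀ r ∈ l, 1 ≤ r ∧ r + 1 ≤ n)
    (hlw : (l.map fun r => Equiv.swap r (r + 1)).prod = w)
    (hlred : l.length = invLen n w)
    (i : ℕ) (hi1 : 1 < i) (hin : i < n) :
    ((∀ m, i ≤ m → m ≤ n → b + 2 ≤ w.symm m) → K.ψ i • (psiWord K l • z) = 0) ∧
    (2 ≤ w.symm i → w.symm i ≤ b + 1 → b + 2 ≤ w.symm (i + 1) →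
      (∀ l' : List ℕ, (∀ r ∈ l', 1 ≤ r ∧ r + 1 ≤ n) →
          (l'.map fun r => Equiv.swap r (r + 1)).prod = Equiv.swap i (i + 1) * w →
          l'.length = invLen n (Equiv.swap i (i + 1) * w) →
          K.ψ i • (psiWord K l • z) = psiWord K l' • z) ∧
      (∀ p q, 2 ≤ p → p < q → q ≤ b + 1 →
          (Equiv.swap i (i + 1) * w) p < (Equiv.swap i (i + 1) * w) q) ∧
      (∀ p q, b + 2 ≤ p → p < q → q ≤ n →
          (Equiv.swap i (i + 1) * w) p < (Equiv.swap i (i + 1) * w) q)) :=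
  specht_hook_psi_on_basis_general b K z hpsiz w hwfix hw1 hleg harm l hl hlw hlred i hi1 hin
end

section
/- Let e = 2 and λ = (a,1^b) a hook partition with b even, and let T be a domino tableau for λ. Then in the Specht module S_λ: (a) y_k v_T = 0 for all k = 1,…,n; (b) ψ_k v_T = 0 for all even k; (c) ψ_1 v_T = 0. -/
open scoped BigOperators

variable {A : Type*} [Ring A] {n : ℕ}

/-!
With `b` even, `i_λ` is the alternating residue sequence `k ↦ k + 1`. Call a vector *domino* if
it has this residue and is killed by every `y_k` and every `ψ_k` with `k` even; `z` is one.
Each `Ψ_j` (`j` odd) maps domino vectors to domino vectors: it swaps two adjacent dominoes, so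
the residue is restored, and pushing `y_k` or an even `ψ_k` through `ψ_j ψ_{j+1} ψ_{j-1} ψ_j`
with the KLR relations leaves only terms with a right factor `ψ_j ψ_{j±1} ψ_j u`, which vanishes
by the braid relation because `ψ_{j±1} u = 0`. This gives (a) and (b). For (c), `ψ_1` commutes
with the normal form unless it starts with `Ψ_3`; in that case the Garnir relation
`ψ_1 ⋯ ψ_{b+1} z = 0` is carried through the normal form by
`ψ_1 ⋯ ψ_m Ψ_{m+2} = ψ_{m+2} ψ_{m+3} ψ_1 ⋯ ψ_{m+2}`.
-/

def altRes : ℕ → ZMod 2 := fun k => (k : ZMod 2) + 1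

theorem altRes_eq_altRes_iff {k m : ℕ} : altRes k = altRes m ↔ k % 2 = m % 2 := by
  simp only [altRes, add_left_inj, ZMod.natCast_eq_natCast_iff']

theorem iLamGen_eq_altRes {b : ℕ} (hb : Even b) : iLamGen b = altRes := by
  have hb0 : (b : ZMod 2) = 0 := (ZMod.natCast_eq_zero_iff_even).mpr hb
  funext k
  simp only [iLamGen, altRes, hb0, add_zero, ite_self]

def NormChain (n : ℕ) : ℕ → List ℕ → Prop
  | _, [] => True
  | c, j :: p => c ≤ j ∧ Odd j ∧ j + 2 ≤ n ∧ NormChain n (c + 2) p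

theorem normChain_of_forall_get {n : ℕ} {p : List ℕ} : ∀ {c : ℕ},
    (∀ i (hi : i < p.length), c + 2 * i ≤ p.get ⟨i, hi⟩ ∧ Odd (p.get ⟨i, hi⟩) ∧
      p.get ⟨i, hi⟩ + 2 ≤ n) → NormChain n c p := by
  induction p with
  | nil => intro _ _; trivial
  | cons j p ih =>
    intro c h
    obtain ⟨hcj, hj, hjn⟩ := h 0 (Nat.succ_pos _)
    refine ⟨by simpa using hcj, hj, hjn, ih fun i hi => ?_⟩
    obtain ⟨hci, hodd, hin⟩ := h (i + 1) (Nat.succ_lt_succ hi)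
    exact ⟨by simp only [List.get_cons_succ] at hci; omega, hodd, hin⟩

theorem NormOK.normChain {n b : ℕ} {p : List ℕ} (hp : NormOK n b p) :
    NormChain n (b + 3 - 2 * p.length) p :=
  normChain_of_forall_get fun i hi =>
    let ⟨hodd, hlow, hup⟩ := hp.2.2 i hi
    ⟨by have := hp.1; omega, hodd, hup⟩

theorem NormOK.forall_mem {n b : ℕ} {p : List ℕ} (hp : NormOK n b p) :
    ∀ j ∈ p, Odd j ∧ j + 2 ≤ n := by
  intro j hj
  obtain ⟨⟨i, hi⟩, rfl⟩ := List.mem_iff_get.mp hj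
  exact ⟨(hp.2.2 i hi).1, (hp.2.2 i hi).2.2⟩

namespace KLR

variable {M : Type*} [AddCommGroup M] [Module A M] (K : KLR A n)

theorem smul_eq_smul_of_mul_e {a b : A} {i : ℕ → ZMod 2} {u : M}
    (h : a * K.e i = b * K.e i) (hu : K.e i • u = u) : a • u = b • u := by
  rw [← hu, ← mul_smul, h, mul_smul]

section Relations

variable {i : ℕ → ZMod 2} {u : M} (r : ℕ)

theorem e_swapSeq_smul_psi_smul (hr : 1 ≤ r) (hrn : r + 1 ≤ n) (hu : K.e i • u = u) :
    K.e (swapSeq r i) • K.ψ r • u = K.ψ r • u := by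
  rw [← hu, ← mul_smul, ← mul_smul, ← K.psi_e r i hr hrn, mul_assoc, K.e_idem, mul_smul]

theorem y_smul_psi_smul_of_ne (hr : 1 ≤ r) (hrn : r + 1 ≤ n) (hi : i r ≠ i (r + 1))
    (hu : K.e i • u = u) : K.y r • K.ψ r • u = K.ψ r • K.y (r + 1) • u := by
  simpa only [mul_smul] using K.smul_eq_smul_of_mul_e (K.y_psi_diff r i hr hrn hi) hu

theorem y_succ_smul_psi_smul_of_ne (hr : 1 ≤ r) (hrn : r + 1 ≤ n) (hi : i r ≠ i (r + 1))
    (hu : K.e i • u = u) : K.y (r + 1) • K.ψ r • u = K.ψ r • K.y r • u := by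
  simpa only [mul_smul] using K.smul_eq_smul_of_mul_e (K.y_psi_diff' r i hr hrn hi) hu

theorem y_smul_psi_smul_of_eq (hr : 1 ≤ r) (hrn : r + 1 ≤ n) (hi : i r = i (r + 1))
    (hu : K.e i • u = u) : K.y r • K.ψ r • u = K.ψ r • K.y (r + 1) • u - u := by
  simpa only [mul_smul, sub_smul, one_smul] using
    K.smul_eq_smul_of_mul_e (K.y_psi_same r i hr hrn hi) hu

theorem y_succ_smul_psi_smul_of_eq (hr : 1 ≤ r) (hrn : r + 1 ≤ n) (hi : i r = i (r + 1))
    (hu : K.e i • u = u) : K.y (r + 1) • K.ψ r • u = K.ψ r • K.y r • u + u := by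
  simpa only [mul_smul, add_smul, one_smul] using
    K.smul_eq_smul_of_mul_e (K.y_psi_same' r i hr hrn hi) hu

theorem y_smul_psi_smul_comm (hr : 1 ≤ r) (hrn : r + 1 ≤ n) {k : ℕ} (hk : 1 ≤ k)
    (hkn : k ≤ n) (hkr : k ≠ r) (hkr' : k ≠ r + 1) :
    K.y k • K.ψ r • u = K.ψ r • K.y k • u := by
  rw [← mul_smul, K.y_psi_comm r k hr hrn hk hkn hkr hkr', mul_smul]

theorem commute_psi_psi (hr : 1 ≤ r) {s : ℕ} (hs : s + 1 ≤ n) (h : r + 1 < s) :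
    Commute (K.ψ r) (K.ψ s) :=
  (K.psi_comm r s hr (by omega) (by omega) hs h).symm

theorem psi_smul_psi_smul_comm (hr : 1 ≤ r) {s : ℕ} (hs : s + 1 ≤ n) (h : r + 1 < s) :
    K.ψ s • K.ψ r • u = K.ψ r • K.ψ s • u := by
  rw [← mul_smul, ← mul_smul, (K.commute_psi_psi r hr hs h).eq]

theorem braid_smul_of_eq (hr : 1 ≤ r) (hrn : r + 2 ≤ n)
    (hi : i r = i (r + 1) ∨ i (r + 1) = i (r + 2)) (hu : K.e i • u = u) :
    K.ψ r • K.ψ (r + 1) • K.ψ r • u = K.ψ (r + 1) • K.ψ r • K.ψ (r + 1) • u := by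
  simpa only [mul_smul] using K.smul_eq_smul_of_mul_e (K.braid_same r i hr hrn hi) hu

theorem braid_smul_of_ne (hr : 1 ≤ r) (hrn : r + 2 ≤ n) (hi : i r ≠ i (r + 1))
    (hi' : i (r + 1) ≠ i (r + 2)) (hu : K.e i • u = u)
    (hy : ∀ k, 1 ≤ k → k ≤ n → K.y k • u = 0) :
    K.ψ r • K.ψ (r + 1) • K.ψ r • u = K.ψ (r + 1) • K.ψ r • K.ψ (r + 1) • u := by
  simpa only [mul_smul, add_smul, sub_smul, hy r hr (by omega), hy (r + 1) (by omega) (by omega),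
    hy (r + 2) (by omega) hrn, smul_zero, add_zero, sub_zero] using
    K.smul_eq_smul_of_mul_e (K.braid_diff r i hr hrn hi hi') hu

theorem y_smul_psi_smul_eq_zero (hr : 1 ≤ r) (hrn : r + 1 ≤ n) (hi : i r ≠ i (r + 1))
    (hu : K.e i • u = u) (hy : ∀ k, 1 ≤ k → k ≤ n → K.y k • u = 0) :
    ∀ k, 1 ≤ k → k ≤ n → K.y k • K.ψ r • u = 0 := by
  intro k hk hkn
  obtain rfl | rfl | ⟨hkr, hkr'⟩ : k = r ∨ k = r + 1 ∨ (k ≠ r ∧ k ≠ r + 1) := by omega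
  · rw [K.y_smul_psi_smul_of_ne k hr hrn hi hu, hy (k + 1) (by omega) hrn, smul_zero]
  · rw [K.y_succ_smul_psi_smul_of_ne r hr hrn hi hu, hy r hr (by omega), smul_zero]
  · rw [K.y_smul_psi_smul_comm r hr hrn hk hkn hkr hkr', hy k hk hkn, smul_zero]

end Relations

theorem psiBig_succ_smul (r : ℕ) (u : M) : PsiBig K (r + 1) • u =
    K.ψ (r + 1) • K.ψ (r + 1 + 1) • K.ψ r • K.ψ (r + 1) • u := by
  simp only [PsiBig, Nat.add_sub_cancel, mul_smul]

structure IsDominoVector (u : M) : Prop where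
  e_smul : K.e altRes • u = u
  y_smul : ∀ k, 1 ≤ k → k ≤ n → K.y k • u = 0
  psi_smul_of_even : ∀ k, Even k → 1 ≤ k → k + 1 ≤ n → K.ψ k • u = 0

namespace IsDominoVector

variable {K} {u : M} {r : ℕ}

theorem psi_psi_succ_psi_smul_eq_zero (hu : K.IsDominoVector u) (hr : Even r)
    (hrn : r + 3 ≤ n) : K.ψ (r + 1) • K.ψ (r + 1 + 1) • K.ψ (r + 1) • u = 0 := by
  obtain ⟨t, rfl⟩ := hr
  rw [K.braid_smul_of_ne (t + t + 1) (by omega) (by omega)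
      (by simp only [ne_eq, altRes_eq_altRes_iff]; omega)
      (by simp only [ne_eq, altRes_eq_altRes_iff]; omega) hu.e_smul hu.y_smul,
    hu.psi_smul_of_even _ ⟨t + 1, by omega⟩ (by omega) (by omega), smul_zero, smul_zero]

theorem psi_psi_pred_psi_smul_eq_zero (hu : K.IsDominoVector u) (hr : Even r) (h2r : 2 ≤ r)
    (hrn : r + 3 ≤ n) : K.ψ (r + 1) • K.ψ r • K.ψ (r + 1) • u = 0 := by
  obtain ⟨t, rfl⟩ := hr
  rw [← K.braid_smul_of_ne (t + t) (by omega) (by omega)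
      (by simp only [ne_eq, altRes_eq_altRes_iff]; omega)
      (by simp only [ne_eq, altRes_eq_altRes_iff]; omega) hu.e_smul hu.y_smul,
    hu.psi_smul_of_even _ ⟨t, rfl⟩ (by omega) (by omega), smul_zero, smul_zero]

theorem e_smul_psiBig_smul (hu : K.IsDominoVector u) (hr : Even r) (h2r : 2 ≤ r)
    (hrn : r + 3 ≤ n) : K.e altRes • PsiBig K (r + 1) • u = PsiBig K (r + 1) • u := by
  -- `Ψ_{r+1}` exchanges the dominoes `{r, r+1}` and `{r+2, r+3}`, preserving parities
  have hres : swapSeq (r + 1) (swapSeq (r + 1 + 1) (swapSeq r (swapSeq (r + 1) altRes)))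
      = altRes := by
    obtain ⟨t, rfl⟩ := hr
    funext k
    simp only [swapSeq]
    split_ifs <;> simp only [altRes_eq_altRes_iff] <;> omega
  rw [psiBig_succ_smul, ← hres]
  refine K.e_swapSeq_smul_psi_smul _ (by omega) (by omega) ?_
  refine K.e_swapSeq_smul_psi_smul _ (by omega) (by omega) ?_
  refine K.e_swapSeq_smul_psi_smul _ (by omega) (by omega) ?_
  exact K.e_swapSeq_smul_psi_smul _ (by omega) (by omega) hu.e_smul

theorem y_smul_psiBig_smul (hu : K.IsDominoVector u) (hr : Even r) (h2r : 2 ≤ r)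
    (hrn : r + 3 ≤ n) (k : ℕ) (hk : 1 ≤ k) (hkn : k ≤ n) :
    K.y k • PsiBig K (r + 1) • u = 0 := by
  have hr2 := Nat.even_iff.mp hr
  have hw := K.y_smul_psi_smul_eq_zero (r + 1) (by omega) (by omega)
    (by simp only [ne_eq, altRes_eq_altRes_iff]; omega) hu.e_smul hu.y_smul
  have heA := K.e_swapSeq_smul_psi_smul (r + 1) (by omega) (by omega) hu.e_smul
  have heB := K.e_swapSeq_smul_psi_smul r (by omega) (by omega) heA
  have heC := K.e_swapSeq_smul_psi_smul (r + 1 + 1) (by omega) (by omega) heB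
  have hV1 := hu.psi_psi_succ_psi_smul_eq_zero hr hrn
  have hV2 := hu.psi_psi_pred_psi_smul_eq_zero hr h2r hrn
  rw [psiBig_succ_smul]
  obtain rfl | rfl | rfl | rfl | ⟨h0, h1, h2, h3⟩ : r = k ∨ k = r + 1 ∨ k = r + 1 + 1 ∨
      k = r + 1 + 1 + 1 ∨
      (k ≠ r ∧ k ≠ r + 1 ∧ k ≠ r + 1 + 1 ∧ k ≠ r + 1 + 1 + 1) := by omega
  · rw [K.y_smul_psi_smul_comm (r + 1) (by omega) (by omega) hk hkn (by omega) (by omega),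
      K.y_smul_psi_smul_comm (r + 1 + 1) (by omega) (by omega) hk hkn (by omega) (by omega),
      K.y_smul_psi_smul_of_eq r hk (by omega)
        (by simp only [swapSeq]; split_ifs <;> simp only [altRes_eq_altRes_iff] <;> omega) heA,
      hw (r + 1) (by omega) (by omega), smul_zero, zero_sub, smul_neg, smul_neg, hV1, neg_zero]
  · rw [K.y_smul_psi_smul_of_ne (r + 1) (by omega) (by omega)
        (by simp only [swapSeq]; split_ifs <;> simp only [ne_eq, altRes_eq_altRes_iff] <;> omega)
        heC,
      K.y_smul_psi_smul_of_eq (r + 1 + 1) (by omega) (by omega)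
        (by simp only [swapSeq]; split_ifs <;> simp only [altRes_eq_altRes_iff] <;> omega) heB,
      K.y_smul_psi_smul_comm r (by omega) (by omega) (by omega) (by omega) (by omega) (by omega),
      hw (r + 1 + 1 + 1) (by omega) (by omega), smul_zero, smul_zero, zero_sub, smul_neg, hV2,
      neg_zero]
  · rw [K.y_succ_smul_psi_smul_of_ne (r + 1) (by omega) (by omega)
        (by simp only [swapSeq]; split_ifs <;> simp only [ne_eq, altRes_eq_altRes_iff] <;> omega)
        heC,
      K.y_smul_psi_smul_comm (r + 1 + 1) (by omega) (by omega) (by omega) (by omega) (by omega)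
        (by omega),
      K.y_succ_smul_psi_smul_of_eq r (by omega) (by omega)
        (by simp only [swapSeq]; split_ifs <;> simp only [altRes_eq_altRes_iff] <;> omega) heA,
      hw r (by omega) (by omega), smul_zero, zero_add, hV1]
  · rw [K.y_smul_psi_smul_comm (r + 1) (by omega) (by omega) hk hkn (by omega) (by omega),
      K.y_succ_smul_psi_smul_of_eq (r + 1 + 1) (by omega) (by omega)
        (by simp only [swapSeq]; split_ifs <;> simp only [altRes_eq_altRes_iff] <;> omega) heB,
      K.y_smul_psi_smul_comm r (by omega) (by omega) (by omega) (by omega) (by omega) (by omega),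
      hw (r + 1 + 1) (by omega) (by omega), smul_zero, smul_zero, zero_add, hV2]
  · rw [K.y_smul_psi_smul_comm (r + 1) (by omega) (by omega) hk hkn h1 h2,
      K.y_smul_psi_smul_comm (r + 1 + 1) (by omega) (by omega) hk hkn h2 h3,
      K.y_smul_psi_smul_comm r (by omega) (by omega) hk hkn h0 h1,
      K.y_smul_psi_smul_comm (r + 1) (by omega) (by omega) hk hkn h1 h2,
      hu.y_smul k hk hkn, smul_zero, smul_zero, smul_zero, smul_zero]

theorem psi_smul_psiBig_smul_of_even (hu : K.IsDominoVector u) (hr : Even r) (h2r : 2 ≤ r)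
    (hrn : r + 3 ≤ n) (k : ℕ) (hk : Even k) (hk1 : 1 ≤ k) (hkn : k + 1 ≤ n) :
    K.ψ k • PsiBig K (r + 1) • u = 0 := by
  have hr2 := Nat.even_iff.mp hr
  have hk2 := Nat.even_iff.mp hk
  have heA := K.e_swapSeq_smul_psi_smul (r + 1) (by omega) (by omega) hu.e_smul
  have heB := K.e_swapSeq_smul_psi_smul r (by omega) (by omega) heA
  have hV1 := hu.psi_psi_succ_psi_smul_eq_zero hr hrn
  have hV2 := hu.psi_psi_pred_psi_smul_eq_zero hr h2r hrn
  rw [psiBig_succ_smul]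
  obtain rfl | rfl | hlt | hgt : r = k ∨ k = r + 1 + 1 ∨ k + 1 < r ∨ r + 1 + 1 + 1 < k := by
    omega
  · rw [K.psi_smul_psi_smul_comm r (by omega) (by omega) (by omega),
      K.braid_smul_of_eq r (by omega) (by omega)
        (Or.inl (by simp only [swapSeq]; split_ifs <;> simp only [altRes_eq_altRes_iff] <;> omega))
        (K.e_swapSeq_smul_psi_smul (r + 1 + 1) (by omega) (by omega) heA),
      hV1, smul_zero, smul_zero]
  · rw [← K.braid_smul_of_eq (r + 1) (by omega) (by omega)
        (Or.inr (by simp only [swapSeq]; split_ifs <;> simp only [altRes_eq_altRes_iff] <;> omega))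
        heB,
      hV2, smul_zero, smul_zero]
  · rw [← K.psi_smul_psi_smul_comm k hk1 (by omega) (by omega),
      ← K.psi_smul_psi_smul_comm k hk1 (by omega) (by omega),
      ← K.psi_smul_psi_smul_comm k hk1 (by omega) hlt,
      ← K.psi_smul_psi_smul_comm k hk1 (by omega) (by omega),
      hu.psi_smul_of_even k hk hk1 hkn, smul_zero, smul_zero, smul_zero, smul_zero]
  · rw [K.psi_smul_psi_smul_comm (r + 1) (by omega) hkn (by omega),
      K.psi_smul_psi_smul_comm (r + 1 + 1) (by omega) hkn (by omega),
      K.psi_smul_psi_smul_comm r (by omega) hkn (by omega),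
      K.psi_smul_psi_smul_comm (r + 1) (by omega) hkn (by omega),
      hu.psi_smul_of_even k hk hk1 hkn, smul_zero, smul_zero, smul_zero, smul_zero]

theorem psiBig_smul (hu : K.IsDominoVector u) {j : ℕ} (hj : Odd j) (h3j : 3 ≤ j)
    (hjn : j + 2 ≤ n) : K.IsDominoVector (PsiBig K j • u) := by
  obtain ⟨r, rfl⟩ : ∃ r, j = r + 1 := ⟨j - 1, by omega⟩
  have hr : Even r := Nat.even_iff.mpr (by have := Nat.odd_iff.mp hj; omega)
  exact ⟨hu.e_smul_psiBig_smul hr (by omega) (by omega),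
    hu.y_smul_psiBig_smul hr (by omega) (by omega),
    hu.psi_smul_psiBig_smul_of_even hr (by omega) (by omega)⟩

theorem chainD_smul (hu : K.IsDominoVector u) {x y : ℕ} (hx : Odd x) (h3y : 3 ≤ y)
    (hxn : x + 2 ≤ n) : K.IsDominoVector (chainD K x y • u) := by
  refine List.prod_induction (fun a => ∀ w : M, K.IsDominoVector w → K.IsDominoVector (a • w))
    (fun a b ha hb w hw => by rw [mul_smul]; exact ha _ (hb w hw))
    (fun w hw => by rwa [one_smul]) ?_ u hu
  simp only [List.mem_map, List.mem_range]
  rintro _ ⟨k, hk, rfl⟩ w hw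
  have hodd : Odd (x - 2 * k) := Nat.Odd.sub_even (by omega) hx (even_two_mul k)
  exact hw.psiBig_smul hodd (by have := Nat.odd_iff.mp hodd; omega) (by omega)

theorem normProd_smul (hu : K.IsDominoVector u) {p : List ℕ}
    (hp : ∀ j ∈ p, Odd j ∧ j + 2 ≤ n) :
    ∀ {c : ℕ}, 3 ≤ c → K.IsDominoVector (normProd K c p • u) := by
  induction p with
  | nil => intro c _; rwa [normProd, one_smul]
  | cons j p ih =>
    intro c hc
    obtain ⟨hj, hjn⟩ := hp j List.mem_cons_self
    rw [normProd, mul_smul]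
    exact (ih (fun i hi => hp i (List.mem_cons_of_mem j hi)) (by omega)).chainD_smul hj hc hjn

end IsDominoVector

theorem commute_psi_psiBig {s t : ℕ} (hs : 1 ≤ s) (hst : s + 3 ≤ t) (htn : t + 2 ≤ n) :
    Commute (K.ψ s) (PsiBig K t) := by
  have h := fun t' (h1 : s + 1 < t') (h2 : t' + 1 ≤ n) => K.commute_psi_psi s hs h2 h1
  exact (((h t (by omega) (by omega)).mul_right (h (t + 1) (by omega) (by omega))).mul_right
    (h (t - 1) (by omega) (by omega))).mul_right (h t (by omega) (by omega))

theorem commute_psi_chainD {s x y : ℕ} (hs : 1 ≤ s) (hsy : s + 4 ≤ y) (hxn : x + 2 ≤ n) :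
    Commute (K.ψ s) (chainD K x y) := by
  refine Commute.list_prod_right _ _ fun a ha => ?_
  obtain ⟨k, hk, rfl⟩ := List.mem_map.mp ha
  exact K.commute_psi_psiBig hs (by have := List.mem_range.mp hk; omega) (by omega)

theorem commute_psi_normProd {s : ℕ} (hs : 1 ≤ s) {p : List ℕ}
    (hp : ∀ j ∈ p, j + 2 ≤ n) :
    ∀ {c : ℕ}, s + 4 ≤ c → Commute (K.ψ s) (normProd K c p) := by
  induction p with
  | nil => intro c _; exact Commute.one_right _
  | cons j p ih =>
    intro c hc
    exact (K.commute_psi_chainD hs hc (hp j List.mem_cons_self)).mul_right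
      (ih (fun i hi => hp i (List.mem_cons_of_mem j hi)) (by omega))

theorem ascWord_one_one : ascWord K 1 1 = K.ψ 1 := by
  simp [ascWord, psiWord]

theorem ascWord_one_add_two (m : ℕ) :
    ascWord K 1 (m + 2) = ascWord K 1 m * K.ψ (m + 1) * K.ψ (m + 2) := by
  simp only [ascWord, psiWord, show m + 2 + 1 - 1 = m + 1 + 1 by omega, Nat.add_sub_cancel,
    List.range_succ, List.map_append, List.prod_append, List.map_cons, List.map_nil,
    List.prod_cons, List.prod_nil, mul_one, mul_assoc]
  rw [add_comm 1 m, add_comm 1 (m + 1)]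

theorem commute_ascWord_one {m : ℕ} {g : A}
    (h : ∀ s, 1 ≤ s → s ≤ m → Commute (K.ψ s) g) :
    Commute (ascWord K 1 m) g := by
  refine Commute.list_prod_left _ _ fun a ha => ?_
  obtain ⟨s, hs, rfl⟩ := List.mem_map.mp ha
  obtain ⟨t, ht, rfl⟩ := List.mem_map.mp hs
  exact h _ (by omega) (by have := List.mem_range.mp ht; omega)

theorem ascWord_one_mul_psiBig {m : ℕ} (hmn : m + 4 ≤ n) :
    ascWord K 1 m * PsiBig K (m + 2) = K.ψ (m + 2) * K.ψ (m + 3) * ascWord K 1 (m + 2) := by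
  have hc : Commute (ascWord K 1 m) (K.ψ (m + 2) * K.ψ (m + 3)) :=
    K.commute_ascWord_one fun s hs hsm =>
      (K.commute_psi_psi s hs (by omega) (by omega)).mul_right
        (K.commute_psi_psi s hs (by omega) (by omega))
  calc ascWord K 1 m * PsiBig K (m + 2)
      = ascWord K 1 m * (K.ψ (m + 2) * K.ψ (m + 3)) * K.ψ (m + 1) * K.ψ (m + 2) := by
        simp only [PsiBig, show m + 2 - 1 = m + 1 by omega, mul_assoc]
    _ = K.ψ (m + 2) * K.ψ (m + 3) * ascWord K 1 (m + 2) := by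
        rw [hc.eq, ascWord_one_add_two]
        simp only [mul_assoc]

theorem chainD_eq_chainD_mul_psiBig (y k : ℕ) :
    chainD K (y + 2 * k) y = chainD K (y + 2 * k) (y + 2) * PsiBig K y := by
  simp only [chainD, show (y + 2 * k + 2 - y) / 2 = k + 1 by omega,
    show (y + 2 * k + 2 - (y + 2)) / 2 = k by omega, List.range_succ, List.map_append,
    List.prod_append, List.map_cons, List.map_nil, List.prod_cons, List.prod_nil, mul_one,
    Nat.add_sub_cancel]

theorem ascWord_one_smul_normProd_smul_eq_zero {u : M} {p : List ℕ} :
    ∀ {m : ℕ}, Odd m → NormChain n (m + 2) p → ascWord K 1 (m + 2 * p.length) • u = 0 →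
      ascWord K 1 m • normProd K (m + 2) p • u = 0 := by
  induction p with
  | nil => intro m _ _ hu; simpa [normProd] using hu
  | cons j p ih =>
    intro m hm ⟨hmj, hj, hjn, hp⟩ hu
    have hu' : ascWord K 1 (m + 2 + 2 * p.length) • u = 0 := by
      rwa [show m + 2 + 2 * p.length = m + 2 * (j :: p).length by simp only [List.length_cons]; ring]
    obtain ⟨k, rfl⟩ : ∃ k, j = m + 2 + 2 * k := by
      have := Nat.odd_iff.mp hm; have := Nat.odd_iff.mp hj
      exact ⟨(j - (m + 2)) / 2, by omega⟩
    have hc : Commute (ascWord K 1 m) (chainD K (m + 2 + 2 * k) (m + 2 + 2)) :=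
      K.commute_ascWord_one fun s hs _ => K.commute_psi_chainD hs (by omega) hjn
    rw [normProd, chainD_eq_chainD_mul_psiBig, mul_smul, mul_smul, ← mul_smul (ascWord K 1 m),
      hc.eq, mul_smul, ← mul_smul (ascWord K 1 m), ascWord_one_mul_psiBig K (by omega),
      mul_smul, mul_smul, ih (hm.add_even even_two) hp hu', smul_zero, smul_zero, smul_zero]

end KLR

theorem specht_hook_domino_y_psi_actions_general {M : Type*} [AddCommGroup M] [Module A M]
    (a b : ℕ) (hn : n = a + b) (hb : Even b)
    (K : KLR A n) (z : M)
    (hy : ∀ k, 1 ≤ k → k ≤ n → K.y k • z = 0)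
    (he1 : K.e (iLamGen b) • z = z)
    (hpsiz : ∀ j, 1 ≤ j → j + 1 ≤ n → j ≠ b + 1 → K.ψ j • z = 0)
    (hgar : ascWord K 1 (b + 1) • z = 0)
    (p : List ℕ) (hp : NormOK n b p)
    (v : M) (hv : v = normProd K (b + 3 - 2 * p.length) p • z) :
    (∀ k, 1 ≤ k → k ≤ n → K.y k • v = 0) ∧
    (∀ k, Even k → 1 ≤ k → k + 1 ≤ n → K.ψ k • v = 0) ∧
    K.ψ 1 • v = 0 := by
  have hb2 := Nat.even_iff.mp hb
  have hd := hp.1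
  have hz : K.IsDominoVector z :=
    ⟨iLamGen_eq_altRes hb ▸ he1, hy,
      fun k hk h1 h2 => hpsiz k h1 h2 (by have := Nat.even_iff.mp hk; omega)⟩
  subst hv
  have hv : K.IsDominoVector _ := hz.normProd_smul hp.forall_mem (c := b + 3 - 2 * p.length)
    (by omega)
  refine ⟨hv.y_smul, hv.psi_smul_of_even, ?_⟩
  obtain h3 | h5 : b + 3 - 2 * p.length = 1 + 2 ∨ 1 + 4 ≤ b + 3 - 2 * p.length := by omega
  · have hchain := hp.normChain
    rw [h3] at hchain ⊢
    rw [← K.ascWord_one_one]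
    exact K.ascWord_one_smul_normProd_smul_eq_zero odd_one hchain
      (by rwa [show 1 + 2 * p.length = b + 1 by omega])
  · rw [← mul_smul, (K.commute_psi_normProd le_rfl (fun j hj => (hp.forall_mem j hj).2) h5).eq,
      mul_smul, hpsiz 1 le_rfl (by omega) (by omega), smul_zero]

/-- Proposition `y-actions`: `e = 2`, `λ = (a, 1^b)` a hook with `b` even.
For every domino tableau `T`, whose basis vector is given in normal form by the data
`p = [j₁ < ⋯ < j_d]`, i.e. `v_T = Ψ↓(j₁, b+3-2d) ⋯ Ψ↓(j_d, b+1) z`: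
(a) `y_k v_T = 0` for all `k`; (b) `ψ_k v_T = 0` for all even `k`; (c) `ψ_1 v_T = 0`. -/
theorem specht_hook_domino_y_psi_actions {M : Type*} [AddCommGroup M] [Module A M]
    (a b : ℕ) (hn : n = a + b) (ha : 1 ≤ a) (hb : Even b)
    (K : KLR A n) (z : M)
    (hy : ∀ k, 1 ≤ k → k ≤ n → K.y k • z = 0)
    (he1 : K.e (iLamGen b) • z = z)
    (he2 : ∀ i, i ≠ iLamGen b → K.e i • z = 0)
    (hpsiz : ∀ j, 1 ≤ j → j + 1 ≤ n → j ≠ b + 1 → K.ψ j • z = 0)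
    (hgar : ascWord K 1 (b + 1) • z = 0)
    (p : List ℕ) (hp : NormOK n b p)
    (v : M) (hv : v = normProd K (b + 3 - 2 * p.length) p • z) :
    (∀ k, 1 ≤ k → k ≤ n → K.y k • v = 0) ∧
    (∀ k, Even k → 1 ≤ k → k + 1 ≤ n → K.ψ k • v = 0) ∧
    K.ψ 1 • v = 0 :=
  specht_hook_domino_y_psi_actions_general a b hn hb K z hy he1 hpsiz hgar p hp v hv
end

section
/- Let λ = (a,1^b) be a hook partition of n and T a standard λ-tableau. If i lies in the leg of T and i+1 lies in the arm (1 < i < n), then w_T^{-1}(i) < w_T^{-1}(i+1), and consequently ℓ(s_i w_T) = ℓ(w_T) + 1; i.e., prepending s_i to any reduced expression of w_T gives a reduced expression of s_i w_T. -/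
open Equiv

def inversions (n : ℕ) (w : Perm ℕ) : Finset (ℕ × ℕ) :=
  ((Finset.Icc 1 n) ×ˢ (Finset.Icc 1 n)).filter fun p => p.1 < p.2 ∧ w p.2 < w p.1

theorem invLen_eq_card_inversions (n : ℕ) (w : Perm ℕ) : invLen n w = (inversions n w).card :=
  rfl

theorem swap_succ_lt_swap_succ_iff {i x y : ℕ} (h : ¬(x = i ∧ y = i + 1))
    (h' : ¬(x = i + 1 ∧ y = i)) : swap i (i + 1) x < swap i (i + 1) y ↔ x < y := by
  simp only [swap_apply_def]
  split_ifs <;> omega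

section SwapAdjacentValues

variable {n i P Q : ℕ} {w : Perm ℕ}

theorem inversions_swap_mul (hP : w P = i) (hQ : w Q = i + 1) (hPQ : P < Q) (hP1 : 1 ≤ P)
    (hQn : Q ≤ n) :
    inversions n (swap i (i + 1) * w) = insert (P, Q) (inversions n w) := by
  have hw_eq_i {p : ℕ} : w p = i ↔ p = P := by rw [← hP, w.injective.eq_iff]
  have hw_eq_succ {p : ℕ} : w p = i + 1 ↔ p = Q := by rw [← hQ, w.injective.eq_iff]
  ext ⟨p, q⟩
  simp only [inversions, Finset.mem_insert, Finset.mem_filter, Finset.mem_product,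
    Finset.mem_Icc, Prod.mk.injEq]
  rw [Perm.mul_apply, Perm.mul_apply]
  by_cases hpq : p = P ∧ q = Q
  · obtain ⟨rfl, rfl⟩ := hpq
    simp only [hP, hQ, swap_apply_left, swap_apply_right, true_and, true_or, iff_true]
    omega
  by_cases hqp : p = Q ∧ q = P
  · omega
  rw [swap_succ_lt_swap_succ_iff (by rwa [hw_eq_i, hw_eq_succ, and_comm])
    (by rwa [hw_eq_i, hw_eq_succ, and_comm])]
  tauto

theorem invLen_swap_mul (hP : w P = i) (hQ : w Q = i + 1) (hPQ : P < Q) (hP1 : 1 ≤ P)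
    (hQn : Q ≤ n) : invLen n (swap i (i + 1) * w) = invLen n w + 1 := by
  rw [invLen_eq_card_inversions, inversions_swap_mul hP hQ hPQ hP1 hQn,
    Finset.card_insert_of_notMem, invLen_eq_card_inversions]
  simp only [inversions, Finset.mem_filter, hP, hQ]
  omega

end SwapAdjacentValues

theorem hook_tableau_length_add_one_general (n b : ℕ)
    (w : Equiv.Perm ℕ)
    (i : ℕ)
    (hileg : 2 ≤ w.symm i ∧ w.symm i ≤ b + 1)
    (hiarm : b + 2 ≤ w.symm (i + 1) ∧ w.symm (i + 1) ≤ n) :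
    w.symm i < w.symm (i + 1) ∧
      invLen n (Equiv.swap i (i + 1) * w) = invLen n w + 1 := by
  have hleg_lt_arm : w.symm i < w.symm (i + 1) := by omega
  exact ⟨hleg_lt_arm, invLen_swap_mul (w.apply_symm_apply i) (w.apply_symm_apply (i + 1))
    hleg_lt_arm (by omega) hiarm.2⟩

/-- let `λ = (a, 1^b)` be a hook partition of `n = a + b` and `T` a standard
`λ`-tableau, encoded by the permutation `w = w_T` of `{1, …, n}` with `w_T T_λ = T` (so
`w 1 = 1`, `w` is increasing on the leg positions `{2, …, b+1}` and on the arm positions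
`{b+2, …, n}`, and fixes everything outside `{1, …, n}`).  If `i` lies in the leg of `T`
(i.e. `2 ≤ w⁻¹ i ≤ b + 1`) and `i + 1` lies in the arm (i.e. `b + 2 ≤ w⁻¹ (i+1) ≤ n`), for
`1 < i < n`, then `w⁻¹ i < w⁻¹ (i+1)` and `ℓ(s_i w) = ℓ(w) + 1`. -/
theorem hook_tableau_length_add_one (n a b : ℕ) (hn : n = a + b) (ha : 1 ≤ a) (hb : 1 ≤ b)
    (w : Equiv.Perm ℕ)
    (hwfix : ∀ m, m = 0 ∨ n < m → w m = m) (hw1 : w 1 = 1)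
    (hleg : ∀ p q, 2 ≤ p → p < q → q ≤ b + 1 → w p < w q)
    (harm : ∀ p q, b + 2 ≤ p → p < q → q ≤ n → w p < w q)
    (i : ℕ) (hi1 : 1 < i) (hin : i < n)
    (hileg : 2 ≤ w.symm i ∧ w.symm i ≤ b + 1)
    (hiarm : b + 2 ≤ w.symm (i + 1) ∧ w.symm (i + 1) ≤ n) :
    w.symm i < w.symm (i + 1) ∧
      invLen n (Equiv.swap i (i + 1) * w) = invLen n w + 1 :=
  hook_tableau_length_add_one_general n b w i hileg hiarm
end
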